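/- For 0 < m < n < 2m with gcd(m,n) = 1 and alphabet Σ of size k ≥ 2, let r(i,k,l) denote the base-k representation of i padded with leading zeros to length l, let T(m,n) = { r(i,k,n−m) 0^{2m−n} r(i+1,k,n−m) : 0 ≤ i ≤ k^{n−m} − 2 }, and let S = (Σ^m ∪ Σ^n) \ T(m,n). Then S* is co-finite and the longest words not in S* have length exactly g(m, l) = m·l − m − l, where l = m·k^{n−m} + (n−m). -/

import Mathlib

/-!
Write `m = d + z`, `n = m + d`, `K = k ^ d` and `L = K * m + d`. The lengths of the words
omitted by `S*` are exactly the numbers outside the semigroup `⟨m, L⟩`, whose Frobenius number is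
`g(m, L)`.

A word of length `a * m + b * L` with `b > 0` lies in `S*`: its `K` windows of length `n` at the
positions `0, m, …, (K - 1) * m` cannot all lie in `T`, since otherwise the values of the
length-`d` prefixes of consecutive windows would go up by one `K` times, exceeding `k ^ d - 1`;
cutting out a window not in `T` lowers `b`, and words of length `a * m` split into words of
length `m`.

Conversely, consider the periodic word `(r(0) 0^z r(1) 0^z ⋯ r(K - 1) 0^z 0^d)^ω`. In any
factorization of one of its prefixes into words of `S`, every cut point lies in `⟨m, L⟩`: a
factor of length `n` starting at `b * L + a * m` is `r(a) 0^z r(a + 1) ∈ T` unless `a + 1 ≥ K`, and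
then it ends at `(b + 1) * L + (a + 1 - K) * m`. So its prefixes of length outside `⟨m, L⟩` are
not in `S*`.
-/

open Computability

theorem List.drop_mul_flatten {α : Type*} {L : List (List α)} {m : ℕ}
    (hL : ∀ x ∈ L, x.length = m) (i : ℕ) : L.flatten.drop (i * m) = (L.drop i).flatten := by
  induction L generalizing i with
  | nil => simp
  | cons x L ih =>
    cases i with
    | zero => simp
    | succ i =>
      rw [Nat.succ_mul, Nat.add_comm, ← List.drop_drop, flatten_cons,
        drop_left' (hL x List.mem_cons_self), ih (fun y hy => hL y (List.mem_cons_of_mem _ hy)),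
        drop_succ_cons]

namespace Language

variable {α : Type*} {S : Language α}

theorem append_mem_kstar {x y : List α} (hx : x ∈ S∗) (hy : y ∈ S∗) : x ++ y ∈ S∗ :=
  kstar_mul_kstar S ▸ append_mem_mul hx hy

theorem mem_kstar_of_mem {x : List α} (hx : x ∈ S) : x ∈ S∗ := le_kstar (a := S) hx

theorem mem_kstar_of_length_eq_mul {m : ℕ} (hS : ∀ w : List α, w.length = m → w ∈ S) (a : ℕ)
    {w : List α} (hw : w.length = a * m) : w ∈ S∗ := by
  induction a generalizing w with
  | zero => simp_all [nil_mem_kstar]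
  | succ a ih =>
    rw [← w.take_append_drop m]
    exact append_mem_kstar (mem_kstar_of_mem (hS _ (by simp [hw, Nat.succ_mul])))
      (ih (by simp [hw, Nat.succ_mul]))

theorem length_mem_of_mem_kstar {P : Set ℕ} {w : List α} (h0 : 0 ∈ P)
    (hstep : ∀ x s t, w = x ++ s ++ t → x.length ∈ P → s ∈ S → x.length + s.length ∈ P)
    (hw : w ∈ S∗) : w.length ∈ P := by
  obtain ⟨L, hwL, hL⟩ := mem_kstar.mp hw
  suffices ∀ L' : List (List α), (∀ s ∈ L', s ∈ S) → ∀ x, w = x ++ L'.flatten →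
      x.length ∈ P → w.length ∈ P from this L hL [] hwL h0
  intro L' hL'
  induction L' with
  | nil => intro x hx hxP; simpa [hx] using hxP
  | cons s L' ih =>
    intro x hx hxP
    have hs := hL' s List.mem_cons_self
    refine ih (fun s' h => hL' s' (List.mem_cons_of_mem _ h)) (x ++ s) (by simp [hx]) ?_
    rw [List.length_append]
    exact hstep x s L'.flatten (by simp [hx]) hxP hs

end Language

namespace SuccWindow

variable {k : ℕ}

def ofDigitsBE (w : List (Fin k)) : ℕ := w.foldl (fun acc a => acc * k + a.val) 0

theorem ofDigitsBE_append_singleton (w : List (Fin k)) (a : Fin k) :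
    ofDigitsBE (w ++ [a]) = ofDigitsBE w * k + a := by
  simp [ofDigitsBE]

theorem ofDigitsBE_lt (w : List (Fin k)) : ofDigitsBE w < k ^ w.length := by
  induction w using List.reverseRecOn with
  | nil => simp [ofDigitsBE]
  | append_singleton w a ih =>
    rw [ofDigitsBE_append_singleton, List.length_append, List.length_singleton, pow_succ]
    nlinarith [a.isLt]

variable [NeZero k]

/-- `padDigits len i` is `r(i, k, len)`: the last `len` base-`k` digits of `i`, most significant
first. -/
def padDigits : ℕ → ℕ → List (Fin k)
  | 0, _ => []
  | len + 1, i => padDigits len (i / k) ++ [Fin.ofNat k i]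

@[simp]
theorem length_padDigits (len i : ℕ) : (padDigits len i : List (Fin k)).length = len := by
  induction len generalizing i <;> simp [padDigits, *]

theorem ofDigitsBE_padDigits {len i : ℕ} (hi : i < k ^ len) :
    ofDigitsBE (padDigits len i : List (Fin k)) = i := by
  induction len generalizing i with
  | zero => simp_all [padDigits, ofDigitsBE]
  | succ len ih =>
    rw [padDigits, ofDigitsBE_append_singleton, ih, Fin.val_ofNat, Nat.div_add_mod']
    rwa [Nat.div_lt_iff_lt_mul (NeZero.pos k), ← pow_succ]

variable (d z : ℕ)

/-- For `m = d + z` and `n = m + d`, this is `T(m, n)`; `generators d z` is then `S`. -/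
def succWindows : Language (Fin k) :=
  {w | ∃ u v : List (Fin k), u.length = d ∧ v.length = d ∧ ofDigitsBE v = ofDigitsBE u + 1 ∧
    w = u ++ List.replicate z 0 ++ v}

def generators : Language (Fin k) :=
  {w | (w.length = d + z ∨ w.length = d + z + d) ∧ w ∉ succWindows d z}

variable {d z}

theorem length_of_mem_succWindows {y : List (Fin k)} (hy : y ∈ succWindows d z) :
    y.length = d + z + d := by
  obtain ⟨u, v, hu, hv, -, rfl⟩ := hy
  simp [hu, hv, Nat.add_assoc]

theorem ofDigitsBE_drop_of_mem_succWindows {y : List (Fin k)} (hy : y ∈ succWindows d z) :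
    ofDigitsBE (y.drop (d + z)) = ofDigitsBE (y.take d) + 1 := by
  obtain ⟨u, v, hu, -, huv, rfl⟩ := hy
  rw [List.append_assoc, List.take_left' hu, ← List.append_assoc,
    List.drop_left' (by simp [hu]), huv]

theorem exists_window_not_mem_succWindows {w : List (Fin k)}
    (hw : (d + z) * k ^ d + d ≤ w.length) :
    ∃ j < k ^ d, (w.drop (j * (d + z))).take (d + z + d) ∉ succWindows d z := by
  by_contra! hwin
  let digitsAt (j : ℕ) : ℕ := ofDigitsBE ((w.drop (j * (d + z))).take d)
  have hsucc : ∀ j < k ^ d, digitsAt (j + 1) = digitsAt j + 1 := by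
    intro j hj
    have := ofDigitsBE_drop_of_mem_succWindows (hwin j hj)
    rwa [List.take_take, min_eq_left (by omega), List.drop_take, List.drop_drop,
      add_tsub_cancel_left, ← Nat.succ_mul] at this
  have hge : ∀ j ≤ k ^ d, j ≤ digitsAt j := by
    intro j
    induction j with
    | zero => simp
    | succ j ih => intro hj; rw [hsucc j hj]; exact Nat.succ_le_succ (ih (by omega))
  have hlt : digitsAt (k ^ d) < k ^ d := by
    have := ofDigitsBE_lt ((w.drop (k ^ d * (d + z))).take d)
    rwa [List.length_take, List.length_drop, min_eq_left (by rw [mul_comm]; omega)] at this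
  exact (hge _ le_rfl).not_gt hlt

theorem mem_generators_of_length_eq (hd : 0 < d) {y : List (Fin k)} (hy : y.length = d + z) :
    y ∈ generators d z :=
  ⟨Or.inl hy, fun hT => by have := length_of_mem_succWindows hT; omega⟩

open Language in
theorem mem_kstar_generators_of_length_eq (hd : 0 < d) (a b : ℕ) {w : List (Fin k)}
    (hw : w.length = a * (d + z) + b * ((d + z) * k ^ d + d)) : w ∈ (generators d z)∗ := by
  induction b generalizing a w with
  | zero =>
    exact mem_kstar_of_length_eq_mul (fun y => mem_generators_of_length_eq hd) a
      (by simpa using hw)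
  | succ b ih =>
    obtain ⟨j, hj, hwin⟩ := exists_window_not_mem_succWindows (w := w) (by rw [hw]; nlinarith)
    obtain ⟨c, hc⟩ : ∃ c, k ^ d = j + 1 + c := ⟨k ^ d - (j + 1), by omega⟩
    have hlength : w.length = j * (d + z) + ((d + z + d) +
        ((a + c) * (d + z) + b * ((d + z) * k ^ d + d))) := by
      rw [hw, hc]; ring
    rw [← w.take_append_drop (j * (d + z)), ← (w.drop (j * (d + z))).take_append_drop (d + z + d),
      List.drop_drop]
    refine append_mem_kstar
      (mem_kstar_of_length_eq_mul (fun y => mem_generators_of_length_eq hd) j ?_)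
      (append_mem_kstar (mem_kstar_of_mem (S := generators d z) ⟨Or.inr ?_, hwin⟩)
        (ih (a + c) ?_))
    all_goals simp only [List.length_take, List.length_drop]; omega

variable (d z)

def block (j : ℕ) : List (Fin k) := padDigits d j ++ List.replicate z 0

def period : List (Fin k) := ((List.range (k ^ d)).map (block d z)).flatten ++ List.replicate d 0

def periodPrefix (N : ℕ) : List (Fin k) := ((List.replicate N (period d z)).flatten).take N

variable {d z}

@[simp]
theorem length_block (j : ℕ) : (block d z j : List (Fin k)).length = d + z := by
  simp [block]

theorem length_period : (period d z : List (Fin k)).length = (d + z) * k ^ d + d := by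
  simp [period, List.length_flatten, Function.comp_def, mul_comm]

theorem length_periodPrefix (hd : 0 < d) (N : ℕ) :
    (periodPrefix d z N : List (Fin k)).length = N := by
  simp only [periodPrefix, List.length_take, List.length_flatten, List.map_replicate,
    List.sum_replicate, length_period, smul_eq_mul]
  exact min_eq_left (Nat.le_mul_of_pos_right N (by omega))

theorem take_drop_period_flatten {R a b : ℕ} (hb : b < R) (ha : a + 1 < k ^ d) :
    ((List.replicate R (period d z : List (Fin k))).flatten.drop
      (b * ((d + z) * k ^ d + d) + a * (d + z))).take (d + z + d) =
      block d z a ++ padDigits d (a + 1) := by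
  obtain ⟨R', hR'⟩ : ∃ R', R - b = R' + 1 := ⟨R - b - 1, by omega⟩
  rw [← List.drop_drop, ← length_period,
    List.drop_mul_flatten (by simp [List.mem_replicate]), List.drop_replicate, hR',
    List.replicate_succ, List.flatten_cons, period, List.append_assoc,
    List.drop_append_of_le_length (by simp [List.length_flatten, Function.comp_def]; nlinarith),
    List.drop_mul_flatten (by simp), List.drop_eq_getElem_cons (by simp; omega),
    List.drop_eq_getElem_cons (by simp; omega)]
  simp [block, List.take_append, Nat.add_assoc]

theorem mem_closure_of_periodPrefix_mem_kstar (hd : 0 < d) {N : ℕ}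
    (h : (periodPrefix d z N : List (Fin k)) ∈ (generators d z)∗) :
    N ∈ AddSubmonoid.closure {d + z, (d + z) * k ^ d + d} := by
  rw [← length_periodPrefix (z := z) (k := k) hd N]
  refine Language.length_mem_of_mem_kstar (zero_mem _) ?_ h
  rintro x s t hxst hx ⟨hs | hs, hsT⟩
  · rw [hs]
    exact add_mem hx (AddSubmonoid.subset_closure (by simp))
  obtain ⟨a, b, hab⟩ := (AddSubmonoid.mem_closure_pair _ _ _).mp hx
  simp only [smul_eq_mul] at hab
  by_cases ha : a + 1 < k ^ d
  · have hflat : (List.replicate N (period d z)).flatten =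
        x ++ s ++ (t ++ (List.replicate N (period d z)).flatten.drop N) := by
      rw [← List.append_assoc, ← hxst, periodPrefix, List.take_append_drop]
    have hlen := congrArg List.length hxst
    simp only [length_periodPrefix hd, List.length_append] at hlen
    have hb : b < N := by
      have := Nat.le_mul_of_pos_right b (show 0 < (d + z) * k ^ d + d by omega)
      omega
    have hs_eq : s = ((List.replicate N (period d z)).flatten.drop x.length).take s.length := by
      rw [hflat, List.append_assoc, List.drop_left, List.take_left]
    rw [hs_eq, hs, ← hab, Nat.add_comm (a * (d + z)), take_drop_period_flatten hb ha, block] at hsT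
    exact absurd ⟨padDigits d a, padDigits d (a + 1), by simp, by simp,
      by rw [ofDigitsBE_padDigits ha, ofDigitsBE_padDigits (by omega : a < k ^ d)], rfl⟩ hsT
  · refine (AddSubmonoid.mem_closure_pair _ _ _).mpr ⟨a + 1 - k ^ d, b + 1, ?_⟩
    obtain ⟨c, hc⟩ : ∃ c, a + 1 = k ^ d + c := ⟨a + 1 - k ^ d, by omega⟩
    rw [hs, ← hab, smul_eq_mul, smul_eq_mul, show a + 1 - k ^ d = c by omega]
    nlinarith

theorem setOf_length_not_mem_kstar_generators (hd : 0 < d) :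
    {len : ℕ | ∃ w : List (Fin k), w ∉ (generators d z)∗ ∧ w.length = len} =
      {N | N ∉ AddSubmonoid.closure {d + z, (d + z) * k ^ d + d}} := by
  ext N
  constructor
  · rintro ⟨w, hw, rfl⟩ hN
    obtain ⟨a, b, hab⟩ := (AddSubmonoid.mem_closure_pair _ _ _).mp hN
    exact hw (mem_kstar_generators_of_length_eq hd a b (by simpa using hab.symm))
  · exact fun hN => ⟨periodPrefix d z N, fun h => hN (mem_closure_of_periodPrefix_mem_kstar hd h),
      length_periodPrefix hd N⟩

end SuccWindow

open SuccWindow in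
/-- For `0 < m < n < 2m` with `gcd(m,n) = 1` and alphabet `Fin k` with
`k ≥ 2`, let `T(m,n)` be the set of words `r(i,k,n−m) 0^{2m−n} r(i+1,k,n−m)` (where `r(i,k,l)`
is the base-`k` representation of `i` padded to length `l`), and let
`S = (Σ^m ∪ Σ^n) \ T(m,n)`. Then `S∗` is co-finite and the longest words not in `S∗` have
length exactly `g(m,l) = m·l − m − l` where `l = m·k^{n−m} + (n−m)`. -/
theorem longest_omitted_exact (k : ℕ) (hk : 2 ≤ k) (m n : ℕ)
    (hmn : m < n) (hn2m : n < 2 * m) (hgcd : Nat.gcd m n = 1)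
    (val : List (Fin k) → ℕ)
    (hval : ∀ w, val w = w.foldl (fun acc d => acc * k + d.val) 0)
    (T : Language (Fin k))
    (hT : T = {w : List (Fin k) | ∃ u v : List (Fin k),
      u.length = n - m ∧ v.length = n - m ∧ val v = val u + 1 ∧
      w = u ++ List.replicate (2 * m - n) (⟨0, by omega⟩ : Fin k) ++ v})
    (S : Language (Fin k))
    (hS : S = {w : List (Fin k) | (w.length = m ∨ w.length = n) ∧ w ∉ T})
    (l : ℕ) (hl : l = m * k ^ (n - m) + (n - m)) :
    Set.Finite ((S∗ : Language (Fin k))ᶜ) ∧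
    IsGreatest {len : ℕ | ∃ w : List (Fin k), w ∉ S∗ ∧ w.length = len} (m * l - m - l) := by
  obtain ⟨d, z, rfl, rfl⟩ : ∃ d z, m = d + z ∧ n = d + z + d :=
    ⟨n - m, 2 * m - n, by omega, by omega⟩
  have : NeZero k := ⟨by omega⟩
  have hval : val = ofDigitsBE := funext hval
  rw [show d + z + d - (d + z) = d by omega] at hT hl
  rw [show 2 * (d + z) - (d + z + d) = z by omega] at hT
  subst hval hT hS hl
  have hcop : Nat.Coprime (d + z) ((d + z) * k ^ d + d) := by
    rwa [Nat.coprime_mul_left_add_right, ← Nat.coprime_self_add_right]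
  have hfrob := frobeniusNumber_pair hcop (by omega) (by nlinarith [Nat.one_le_pow d k (by omega)])
  rw [FrobeniusNumber, ← setOf_length_not_mem_kstar_generators (by omega)] at hfrob
  exact ⟨(List.finite_length_le _ _).subset fun w hw => hfrob.2 ⟨w, hw, rfl⟩, hfrob⟩
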